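/- arXiv:2406.16597 — 4 statements merged into one kernel-verified Lean document; each statement's English description precedes it below -/
import Mathlib

section
/- For every nonnegative integer n and every complex number x, if n is odd then x^n = 2^{-(n-1)} * sum over k from 0 to (n-1)/2 of binomial(n, (n-1)/2 - k) * T_{2k+1}(x), where T_m denotes the m-th Chebyshev polynomial of the first kind. -/
open Finset

/-!
Write `x = cos z` and `a = exp (i z)`, `b = exp (-i z)`, so that `a b = 1`, `x = (a + b) / 2` and
`T_j(x) = (a ^ j + b ^ j) / 2`. Expanding `(a + b) ^ (2m+1)` binomially and pairing the term
`a ^ j b ^ (2m+1-j)` with its mirror image `a ^ (2m+1-j) b ^ j` gives `a ^ (2k+1) + b ^ (2k+1)`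
with `k = m - j` for `j ≤ m`, i.e. twice `T_{2k+1}(x)`.
-/

theorem add_pow_two_mul_add_one_of_mul_eq_one {R : Type*} [CommRing R] {a b : R} (hab : a * b = 1)
    (m : ℕ) :
    (a + b) ^ (2 * m + 1) =
      ∑ k ∈ range (m + 1), ((2 * m + 1).choose (m - k) : R) * (a ^ (2 * k + 1) + b ^ (2 * k + 1)) := by
  have hsplit : 2 * m + 1 + 1 = (m + 1) + (m + 1) := by ring
  rw [add_pow, hsplit, sum_range_add, ← sum_range_reflect _ (m + 1), ← sum_add_distrib]
  refine sum_congr rfl fun k hk => ?_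
  have hkm : k ≤ m := Nat.lt_succ_iff.mp (mem_range.mp hk)
  have hlow : a ^ (m - k) * b ^ (2 * m + 1 - (m - k)) = b ^ (2 * k + 1) := by
    rw [show 2 * m + 1 - (m - k) = (m - k) + (2 * k + 1) by omega, pow_add, ← mul_assoc,
      ← mul_pow, hab, one_pow, one_mul]
  have hhigh : a ^ (m + 1 + k) * b ^ (2 * m + 1 - (m + 1 + k)) = a ^ (2 * k + 1) := by
    rw [show m + 1 + k = (2 * k + 1) + (m - k) by omega,
      show 2 * m + 1 - (2 * k + 1 + (m - k)) = m - k by omega,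
      pow_add, mul_assoc, ← mul_pow, hab, one_pow, mul_one]
  have hchoose : (2 * m + 1).choose (m + 1 + k) = (2 * m + 1).choose (m - k) := by
    rw [← Nat.choose_symm (by omega : m + 1 + k ≤ 2 * m + 1)]
    congr 1
    omega
  rw [show m + 1 - 1 - k = m - k by omega, hlow, hhigh, hchoose]
  ring

theorem Polynomial.Chebyshev.T_complex_cos_eq_exp (z : ℂ) (j : ℕ) :
    (T ℂ j).eval (Complex.cos z) =
      (Complex.exp (z * Complex.I) ^ j + Complex.exp (-(z * Complex.I)) ^ j) / 2 := by
  rw [T_complex_cos, Complex.cos, ← Complex.exp_nat_mul, ← Complex.exp_nat_mul]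
  push_cast
  ring_nf

theorem chebyshev_odd_monomial (n : ℕ) (hn : Odd n) (x : ℂ) :
    x ^ n = (1 / 2 ^ (n - 1)) *
      ∑ k ∈ Finset.range ((n - 1) / 2 + 1),
        (n.choose ((n - 1) / 2 - k) : ℂ) * (Polynomial.Chebyshev.T ℂ (2 * k + 1)).eval x := by
  obtain ⟨m, rfl⟩ := hn
  obtain ⟨z, rfl⟩ := Complex.cos_surjective x
  set a := Complex.exp (z * Complex.I)
  set b := Complex.exp (-(z * Complex.I))
  have hab : a * b = 1 := by rw [← Complex.exp_add, add_neg_cancel, Complex.exp_zero]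
  have hcos : Complex.cos z = (a + b) / 2 := by
    simpa using Polynomial.Chebyshev.T_complex_cos_eq_exp z 1
  have hT (k : ℕ) : (Polynomial.Chebyshev.T ℂ (2 * k + 1)).eval (Complex.cos z) =
      (a ^ (2 * k + 1) + b ^ (2 * k + 1)) / 2 := by
    exact_mod_cast Polynomial.Chebyshev.T_complex_cos_eq_exp z (2 * k + 1)
  rw [show 2 * m + 1 - 1 = 2 * m by omega, show 2 * m / 2 = m by omega]
  calc Complex.cos z ^ (2 * m + 1) = (a + b) ^ (2 * m + 1) / 2 ^ (2 * m + 1) := by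
        rw [hcos, div_pow]
    _ = _ := by
      rw [add_pow_two_mul_add_one_of_mul_eq_one hab, sum_div, mul_sum]
      refine sum_congr rfl fun k _ => ?_
      rw [hT, pow_succ (2 : ℂ)]
      field_simp
end

section
/- Let J be a compact subset of ℝ \ {0} and define φ(y,α) := -2α/(1-y)^2 + 2α/(1-y) - (2/α)·log(1-y) for y in [0,1). Then there is a constant C such that for all y in [0,1) and all α in J, the absolute value of the integral from y to 1 of e^{-iφ(x,α)} dx is at most C·(1-y)^3. -/
open Complex

noncomputable def phase (y α : ℝ) : ℝ :=
  -2 * α / (1 - y) ^ 2 + 2 * α / (1 - y) - 2 / α * Real.log (1 - y)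

open Set MeasureTheory intervalIntegral

/-!
Write `u = 1 - x`. Then `φ' = (2u² + 2α²u - 4α²) / (α u³)`, so as `u → 0` the phase oscillates
like `1/u²` and `ψ = 1/φ'` is of size `u³/|α|`. Integrating by parts with `e^{-iφ} = i ψ (e^{-iφ})'`
bounds `∫_y^b e^{-iφ}` by the boundary values `|ψ(y)| + |ψ(b)|` plus `∫ |ψ'|`; near `u = 0` the
derivative `ψ'` has the sign of `α`, so `∫ |ψ'| = |ψ(b) - ψ(y)|` and everything is
`O((1 - y)³ / |α|)`, uniformly in `b < 1`. Away from `u = 0` the trivial bound `1 - y` suffices,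
and compactness of `J` keeps `|α|` away from `0`.
-/

theorem norm_cexp_neg_I_mul_ofReal (r : ℝ) : ‖cexp (-I * r)‖ = 1 := by
  rw [norm_exp]; simp

theorem norm_integral_cexp_neg_I_mul_le (φ : ℝ → ℝ) (a b : ℝ) :
    ‖∫ x in a..b, cexp (-I * φ x)‖ ≤ |b - a| := by
  simpa using norm_integral_le_of_norm_le_const (C := 1) (a := a) (b := b)
    fun x _ => (norm_cexp_neg_I_mul_ofReal (φ x)).le

section FirstDerivativeTest

variable {φ φ' ψ ψ' : ℝ → ℝ} {a b : ℝ}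

theorem intervalIntegrable_cexp_neg_I_mul (hφ : AEStronglyMeasurable φ) :
    IntervalIntegrable (fun x => cexp (-I * φ x)) volume a b :=
  intervalIntegrable_const.mono_fun' (by fun_prop)
    (ae_of_all _ fun x => (norm_cexp_neg_I_mul_ofReal (φ x)).le)

theorem intervalIntegrable_deriv_of_nonneg_or_nonpos
    (hψ : ∀ x ∈ uIcc a b, HasDerivAt ψ (ψ' x) x)
    (hsign : (∀ x ∈ uIcc a b, 0 ≤ ψ' x) ∨ ∀ x ∈ uIcc a b, ψ' x ≤ 0) :
    IntervalIntegrable ψ' volume a b := by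
  have hcont : ContinuousOn ψ (uIcc a b) := fun x hx => (hψ x hx).continuousAt.continuousWithinAt
  have hIoo : Ioo (min a b) (max a b) ⊆ uIcc a b := Ioo_subset_Icc_self
  rcases hsign with hpos | hneg
  · exact intervalIntegrable_deriv_of_nonneg hcont (fun x hx => hψ x (hIoo hx))
      (fun x hx => hpos x (hIoo hx))
  · simpa using (intervalIntegrable_deriv_of_nonneg (g' := -ψ') hcont.neg
      (fun x hx => (hψ x (hIoo hx)).neg) (fun x hx => neg_nonneg.2 (hneg x (hIoo hx)))).neg

theorem abs_integral_abs_deriv_eq_abs_sub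
    (hψ : ∀ x ∈ uIcc a b, HasDerivAt ψ (ψ' x) x)
    (hsign : (∀ x ∈ uIcc a b, 0 ≤ ψ' x) ∨ ∀ x ∈ uIcc a b, ψ' x ≤ 0) :
    |(∫ x in a..b, |ψ' x|)| = |ψ b - ψ a| := by
  have hFTC :=
    integral_eq_sub_of_hasDerivAt hψ (intervalIntegrable_deriv_of_nonneg_or_nonpos hψ hsign)
  rcases hsign with hpos | hneg
  · rw [integral_congr fun x hx => abs_of_nonneg (hpos x hx), hFTC]
  · rw [integral_congr fun x hx => abs_of_nonpos (hneg x hx), intervalIntegral.integral_neg, hFTC,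
      abs_neg]

theorem integral_cexp_neg_I_mul_eq_of_mul_deriv_eq_one
    (hφ : ∀ x ∈ uIcc a b, HasDerivAt φ (φ' x) x) (hψ : ∀ x ∈ uIcc a b, HasDerivAt ψ (ψ' x) x)
    (hψφ : ∀ x ∈ uIcc a b, ψ x * φ' x = 1) (hψ' : IntervalIntegrable ψ' volume a b) :
    ∫ x in a..b, cexp (-I * φ x) =
      I * (ψ b * cexp (-I * φ b) - ψ a * cexp (-I * φ a)) -
        I * ∫ x in a..b, ψ' x * cexp (-I * φ x) := by
  set f : ℝ → ℂ := fun x => cexp (-I * φ x)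
  have hf : ∀ x ∈ uIcc a b, HasDerivAt f (-I * φ' x * f x) x := fun x hx => by
    simpa [f, mul_comm] using ((hφ x hx).ofReal_comp.const_mul (-I)).cexp
  have hfc : ContinuousOn f (uIcc a b) := fun x hx => (hf x hx).continuousAt.continuousWithinAt
  -- since `ψ φ' = 1`, the product rule gives `(ψ f)' = ψ' f - I f`
  have hψf : ∀ x ∈ uIcc a b, HasDerivAt (fun t => (ψ t : ℂ) * f t) (ψ' x * f x - I * f x) x := by
    intro x hx
    have h1 : (ψ x : ℂ) * φ' x = 1 := by exact_mod_cast hψφ x hx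
    exact ((hψ x hx).ofReal_comp.fun_mul (hf x hx)).congr_deriv
      (by linear_combination -I * f x * h1)
  have hψ'f : IntervalIntegrable (fun x => (ψ' x : ℂ) * f x) volume a b :=
    IntervalIntegrable.mul_continuousOn ⟨hψ'.1.ofReal, hψ'.2.ofReal⟩ hfc
  have hIf : IntervalIntegrable (fun x => I * f x) volume a b :=
    (hfc.const_smul I).intervalIntegrable
  have hFTC := integral_eq_sub_of_hasDerivAt hψf (hψ'f.sub hIf)
  rw [integral_sub hψ'f hIf, intervalIntegral.integral_const_mul] at hFTC
  simp only [f] at hFTC ⊢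
  linear_combination I * hFTC + (∫ x in a..b, cexp (-I * φ x)) * I_sq

theorem norm_integral_cexp_neg_I_mul_le_of_mul_deriv_eq_one
    (hφ : ∀ x ∈ uIcc a b, HasDerivAt φ (φ' x) x) (hψ : ∀ x ∈ uIcc a b, HasDerivAt ψ (ψ' x) x)
    (hψφ : ∀ x ∈ uIcc a b, ψ x * φ' x = 1)
    (hsign : (∀ x ∈ uIcc a b, 0 ≤ ψ' x) ∨ ∀ x ∈ uIcc a b, ψ' x ≤ 0) :
    ‖∫ x in a..b, cexp (-I * φ x)‖ ≤ 2 * (|ψ a| + |ψ b|) := by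
  rw [integral_cexp_neg_I_mul_eq_of_mul_deriv_eq_one hφ hψ hψφ
    (intervalIntegrable_deriv_of_nonneg_or_nonpos hψ hsign)]
  have hbdry : ‖(ψ b : ℂ) * cexp (-I * φ b) - ψ a * cexp (-I * φ a)‖ ≤ |ψ b| + |ψ a| :=
    (norm_sub_le _ _).trans_eq (by
      simp only [norm_mul, norm_real, Real.norm_eq_abs, norm_cexp_neg_I_mul_ofReal, mul_one])
  have hint : ‖∫ x in a..b, (ψ' x : ℂ) * cexp (-I * φ x)‖ ≤ |ψ b - ψ a| :=
    calc ‖∫ x in a..b, (ψ' x : ℂ) * cexp (-I * φ x)‖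
        ≤ |∫ x in a..b, ‖(ψ' x : ℂ) * cexp (-I * φ x)‖| := norm_integral_le_abs_integral_norm
      _ = |(∫ x in a..b, |ψ' x|)| := by
        simp only [norm_mul, norm_real, Real.norm_eq_abs, norm_cexp_neg_I_mul_ofReal, mul_one]
      _ = |ψ b - ψ a| := abs_integral_abs_deriv_eq_abs_sub hψ hsign
  calc _ ≤ ‖I * ((ψ b : ℂ) * cexp (-I * φ b) - ψ a * cexp (-I * φ a))‖ +
        ‖I * ∫ x in a..b, (ψ' x : ℂ) * cexp (-I * φ x)‖ := norm_sub_le _ _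
    _ ≤ |ψ b| + |ψ a| + |ψ b - ψ a| := by simp only [norm_mul, norm_I, one_mul]; gcongr
    _ ≤ 2 * (|ψ a| + |ψ b|) := by linarith [abs_sub (ψ b) (ψ a)]

end FirstDerivativeTest

theorem norm_integral_le_of_forall_lt {E : Type*} [NormedAddCommGroup E] [NormedSpace ℝ E]
    {f : ℝ → E} {a c B : ℝ} (hac : a < c) (hf : IntervalIntegrable f volume a c)
    (h : ∀ b ∈ Ico a c, ‖∫ x in a..b, f x‖ ≤ B) : ‖∫ x in a..c, f x‖ ≤ B := by
  have hcont := continuousOn_primitive_interval' hf left_mem_uIcc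
  have hc : c ∈ closure (Ico a c) := by rw [closure_Ico hac.ne]; exact right_mem_Icc.2 hac.le
  have hF : ContinuousWithinAt (fun b => ∫ x in a..b, f x) (Ico a c) c :=
    (hcont c right_mem_uIcc).mono (Ico_subset_Icc_self.trans (uIcc_of_le hac.le).symm.subset)
  exact ContinuousWithinAt.closure_le hc hF.norm continuousWithinAt_const h

theorem exists_pos_le_abs_of_isClosed {J : Set ℝ} (hJ : IsClosed J) (h0 : (0 : ℝ) ∉ J) :
    ∃ δ > 0, ∀ α ∈ J, δ ≤ |α| := by
  obtain ⟨δ, hδ, hball⟩ := Metric.isOpen_iff.1 hJ.isOpen_compl 0 h0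
  refine ⟨δ, hδ, fun α hα => not_lt.1 fun hlt => hball ?_ hα⟩
  simpa using hlt

def phaseDenom (α u : ℝ) : ℝ := 2 * u ^ 2 + 2 * α ^ 2 * u - 4 * α ^ 2

-- The paper's `φ' = -4α/u³ + 2α/u² + 2/(αu)`, `u = 1 - x`, over a common denominator.
noncomputable def phaseDeriv (α x : ℝ) : ℝ := phaseDenom α (1 - x) / (α * (1 - x) ^ 3)

noncomputable def invPhaseDeriv (α x : ℝ) : ℝ := α * (1 - x) ^ 3 / phaseDenom α (1 - x)

theorem measurable_phase (α : ℝ) : Measurable fun x => phase x α := by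
  unfold phase; fun_prop

theorem hasDerivAt_phase {α x : ℝ} (hα : α ≠ 0) (hx : x < 1) :
    HasDerivAt (fun t => phase t α) (phaseDeriv α x) x := by
  have hu : 1 - x ≠ 0 := (sub_pos.2 hx).ne'
  have h1 : HasDerivAt (fun t : ℝ => 1 - t) (-1) x := by
    simpa using (hasDerivAt_id x).const_sub 1
  have h := (((hasDerivAt_const x (-2 * α)).div (h1.fun_pow 2) (pow_ne_zero 2 hu)).add
    ((hasDerivAt_const x (2 * α)).div h1 hu)).sub
    (((Real.hasDerivAt_log hu).comp x h1).const_mul (2 / α))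
  refine h.congr_deriv ?_
  unfold phaseDeriv phaseDenom
  field_simp
  ring

theorem hasDerivAt_invPhaseDeriv {α x : ℝ} (hN : phaseDenom α (1 - x) ≠ 0) :
    HasDerivAt (invPhaseDeriv α)
      (α * ((1 - x) ^ 2 * (12 * α ^ 2 - 4 * α ^ 2 * (1 - x) - 2 * (1 - x) ^ 2) /
        phaseDenom α (1 - x) ^ 2)) x := by
  have h1 : HasDerivAt (fun t : ℝ => 1 - t) (-1) x := by
    simpa using (hasDerivAt_id x).const_sub 1
  have hN' : HasDerivAt (fun t => phaseDenom α (1 - t)) (-(4 * (1 - x) + 2 * α ^ 2)) x := by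
    unfold phaseDenom
    exact ((((h1.fun_pow 2).const_mul 2).fun_add (h1.const_mul (2 * α ^ 2))).sub_const
      (4 * α ^ 2)).congr_deriv (by push_cast; ring)
  refine ((h1.fun_pow 3).const_mul α |>.div hN' hN).congr_deriv ?_
  unfold phaseDenom at hN ⊢
  generalize 1 - x = u at *
  field_simp
  ring

theorem invPhaseDeriv_mul_phaseDeriv {α x : ℝ} (hα : α ≠ 0) (hx : x < 1)
    (hN : phaseDenom α (1 - x) ≠ 0) : invPhaseDeriv α x * phaseDeriv α x = 1 := by
  have hu : 1 - x ≠ 0 := (sub_pos.2 hx).ne'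
  unfold invPhaseDeriv phaseDeriv
  field_simp

theorem phaseDenom_le {α u : ℝ} (hu0 : 0 ≤ u) (hu : u ≤ 1 / 2) (huα : u ≤ α ^ 2) :
    phaseDenom α u ≤ -2 * α ^ 2 := by
  unfold phaseDenom; nlinarith

theorem abs_invPhaseDeriv_le {α x : ℝ} (hα : α ≠ 0) (hx : x < 1) (hx2 : 1 - x ≤ 1 / 2)
    (hxα : 1 - x ≤ α ^ 2) : |invPhaseDeriv α x| ≤ (1 - x) ^ 3 / (2 * |α|) := by
  have hN : 2 * |α| ^ 2 ≤ |phaseDenom α (1 - x)| := by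
    have := phaseDenom_le (sub_pos.2 hx).le hx2 hxα
    rw [sq_abs, abs_of_neg (by nlinarith [sq_pos_of_ne_zero hα])]
    linarith
  unfold invPhaseDeriv
  have hα' := abs_pos.2 hα
  rw [abs_div, abs_mul, abs_of_pos (pow_pos (sub_pos.2 hx) 3),
    div_le_div_iff₀ (lt_of_lt_of_le (by positivity) hN) (by positivity)]
  calc |α| * (1 - x) ^ 3 * (2 * |α|) = (1 - x) ^ 3 * (2 * |α| ^ 2) := by ring
    _ ≤ (1 - x) ^ 3 * |phaseDenom α (1 - x)| := by have := (sub_pos.2 hx).le; gcongr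

theorem norm_integral_cexp_phase_le_of_near_one {α y : ℝ} (hα : α ≠ 0) (hy : y < 1)
    (hy2 : 1 - y ≤ 1 / 2) (hyα : 1 - y ≤ α ^ 2) :
    ‖∫ x in y..1, cexp (-I * phase x α)‖ ≤ 2 / |α| * (1 - y) ^ 3 := by
  refine norm_integral_le_of_forall_lt hy
    (intervalIntegrable_cexp_neg_I_mul (measurable_phase α).aestronglyMeasurable)
    fun b ⟨hyb, hb⟩ => ?_
  have hnear : ∀ x ∈ uIcc y b, x < 1 ∧ 1 - x ≤ 1 / 2 ∧ 1 - x ≤ α ^ 2 := by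
    intro x hx
    rw [uIcc_of_le hyb] at hx
    exact ⟨by linarith [hx.2], by linarith [hx.1], by linarith [hx.1]⟩
  have hN : ∀ x ∈ uIcc y b, phaseDenom α (1 - x) ≠ 0 := fun x hx => by
    obtain ⟨hx1, hx2, hxα⟩ := hnear x hx
    nlinarith [phaseDenom_le (sub_pos.2 hx1).le hx2 hxα, sq_pos_of_ne_zero hα]
  have hfactor : ∀ x ∈ uIcc y b, 0 ≤ (1 - x) ^ 2 * (12 * α ^ 2 - 4 * α ^ 2 * (1 - x) -
      2 * (1 - x) ^ 2) / phaseDenom α (1 - x) ^ 2 := fun x hx => by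
    obtain ⟨hx1, hx2, hxα⟩ := hnear x hx
    have : 0 ≤ 12 * α ^ 2 - 4 * α ^ 2 * (1 - x) - 2 * (1 - x) ^ 2 := by nlinarith
    positivity
  have hsign := (le_total 0 α).imp (fun hα0 x hx => mul_nonneg hα0 (hfactor x hx))
    (fun hα0 x hx => mul_nonpos_of_nonpos_of_nonneg hα0 (hfactor x hx))
  have hψ : ∀ x ∈ uIcc y b, |invPhaseDeriv α x| ≤ (1 - y) ^ 3 / (2 * |α|) := fun x hx => by
    obtain ⟨hx1, hx2, hxα⟩ := hnear x hx
    have hyx : y ≤ x := by rw [uIcc_of_le hyb] at hx; exact hx.1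
    refine (abs_invPhaseDeriv_le hα hx1 hx2 hxα).trans ?_
    have := (sub_pos.2 hx1).le
    gcongr
  calc ‖∫ x in y..b, cexp (-I * phase x α)‖
      ≤ 2 * (|invPhaseDeriv α y| + |invPhaseDeriv α b|) :=
        norm_integral_cexp_neg_I_mul_le_of_mul_deriv_eq_one
          (fun x hx => hasDerivAt_phase hα (hnear x hx).1)
          (fun x hx => hasDerivAt_invPhaseDeriv (hN x hx))
          (fun x hx => invPhaseDeriv_mul_phaseDeriv hα (hnear x hx).1 (hN x hx)) hsign
    _ ≤ 2 * ((1 - y) ^ 3 / (2 * |α|) + (1 - y) ^ 3 / (2 * |α|)) := by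
        gcongr
        exacts [hψ y left_mem_uIcc, hψ b right_mem_uIcc]
    _ = 2 / |α| * (1 - y) ^ 3 := by ring

theorem oscillatory_integral_bound (J : Set ℝ) (hJ : IsCompact J) (hJ0 : (0 : ℝ) ∉ J) :
    ∃ C : ℝ, ∀ y ∈ Set.Ico (0 : ℝ) 1, ∀ α ∈ J,
      ‖∫ x in y..1, Complex.exp (-Complex.I * (phase x α : ℂ))‖ ≤ C * (1 - y) ^ 3 := by
  obtain ⟨δ, hδ, hδJ⟩ := exists_pos_le_abs_of_isClosed hJ.isClosed hJ0
  set u₀ := min (1 / 2 : ℝ) (δ ^ 2)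
  have hu₀ : 0 < u₀ := lt_min (by norm_num) (by positivity)
  refine ⟨2 / δ + 1 / u₀ ^ 2, fun y ⟨_, hy⟩ α hα => ?_⟩
  have hαδ := hδJ α hα
  have hy0 : 0 < 1 - y := sub_pos.2 hy
  rcases le_or_gt (1 - y) u₀ with hnear | hfar
  · have hδα : δ ^ 2 ≤ α ^ 2 := by rw [← sq_abs α]; gcongr
    calc _ ≤ 2 / |α| * (1 - y) ^ 3 :=
          norm_integral_cexp_phase_le_of_near_one (abs_pos.1 (hδ.trans_le hαδ)) hy
            (hnear.trans (min_le_left _ _)) (hnear.trans ((min_le_right _ _).trans hδα))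
      _ ≤ 2 / δ * (1 - y) ^ 3 := by gcongr
      _ ≤ _ := by gcongr; exact le_add_of_nonneg_right (by positivity)
  · calc _ ≤ |1 - y| := norm_integral_cexp_neg_I_mul_le _ y 1
      _ = (1 - y) ^ 3 / (1 - y) ^ 2 := by rw [abs_of_pos hy0]; field_simp
      _ ≤ 1 / u₀ ^ 2 * (1 - y) ^ 3 := by rw [div_eq_inv_mul, one_div]; gcongr
      _ ≤ _ := by gcongr; exact le_add_of_nonneg_left (by positivity)
end

section
/- Let a < b, f continuous on [a,b], g continuously differentiable and real-valued on [a,b] with |g'| > 0 on [a,b], and p a polynomial with complex coefficients of degree d. Then the absolute value of ∫_a^b e^{ig(x)} f(x) dx − e^{ig(a)}·sum_{k=0}^{d} i^{k+1} p^{(k)}(g(a)) + e^{ig(b)}·sum_{k=0}^{d} i^{k+1} p^{(k)}(g(b)) is at most the L^1 norm on (a,b) of f − (p∘g)·g'. -/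
/-!
Writing `Q = -∑ₖ i^(k+1) p^(k)`, one has `i Q + Q' = p`, since the sum telescopes and
`p^(d+1) = 0`. Hence `x ↦ e^{i g(x)} Q(g(x))` is a primitive of `e^{i g} (p ∘ g) g'` on `[a, b]`, and
the boundary terms in the statement are exactly its increment. The left-hand side is therefore
`‖∫ e^{i g} (f - (p ∘ g) g')‖`, and `|e^{i g}| = 1`.
-/

open Complex Finset

open Polynomial in
noncomputable def expIMulAntideriv (p : ℂ[X]) : ℂ[X] :=
  -∑ k ∈ range (p.natDegree + 1), C (I ^ (k + 1)) * derivative^[k] p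

namespace expIMulAntideriv

open Polynomial

theorem eval_eq (p : ℂ[X]) (z : ℂ) :
    (expIMulAntideriv p).eval z =
      -∑ k ∈ range (p.natDegree + 1), I ^ (k + 1) * (derivative^[k] p).eval z := by
  simp only [expIMulAntideriv, eval_neg, eval_finsetSum, eval_mul, eval_C]

theorem C_I_mul_add_derivative (p : ℂ[X]) :
    C I * expIMulAntideriv p + derivative (expIMulAntideriv p) = p := by
  have hI : ∀ k : ℕ, C (I * I ^ (k + 1)) = -C (I ^ k) := fun k => by
    rw [← C_neg, pow_succ, mul_comm, mul_assoc, I_mul_I, mul_neg_one]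
  have htelescope :
      C I * expIMulAntideriv p + derivative (expIMulAntideriv p) =
        ∑ k ∈ range (p.natDegree + 1),
          (C (I ^ k) * derivative^[k] p - C (I ^ (k + 1)) * derivative^[k + 1] p) := by
    simp only [expIMulAntideriv, mul_neg, derivative_neg, derivative_sum, derivative_C_mul,
      mul_sum, ← mul_assoc, ← C_mul, hI, neg_mul, sum_neg_distrib, neg_neg,
      Function.iterate_succ_apply', sub_eq_add_neg, sum_add_distrib]
  rw [htelescope, sum_range_sub' (fun k => C (I ^ k) * derivative^[k] p),
    iterate_derivative_eq_zero (Nat.lt_succ_self _)]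
  simp

theorem hasDerivAt_exp_mul_eval (p : ℂ[X]) (z : ℂ) :
    HasDerivAt (fun w => exp (I * w) * (expIMulAntideriv p).eval w)
      (exp (I * z) * p.eval z) z := by
  have hexp : HasDerivAt (fun w => exp (I * w)) (exp (I * z) * I) z := by
    simpa using ((hasDerivAt_id z).const_mul I).cexp
  refine (hexp.fun_mul (Polynomial.hasDerivAt (expIMulAntideriv p) z)).congr_deriv ?_
  conv_rhs => rw [← C_I_mul_add_derivative p]
  simp only [eval_add, eval_mul, eval_C]
  ring

end expIMulAntideriv

theorem norm_integral_sub_sub_le_integral_norm_sub {E : Type*} [NormedAddCommGroup E]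
    [NormedSpace ℝ E] [CompleteSpace E] {a b : ℝ} (hab : a ≤ b) {h G φ : ℝ → E}
    (hG : ∀ x ∈ Set.Icc a b, HasDerivAt G (φ x) x)
    (hφ : IntervalIntegrable φ MeasureTheory.volume a b)
    (hh : IntervalIntegrable h MeasureTheory.volume a b) :
    ‖(∫ x in a..b, h x) - (G b - G a)‖ ≤ ∫ x in a..b, ‖h x - φ x‖ := by
  rw [← intervalIntegral.integral_eq_sub_of_hasDerivAt (by rwa [Set.uIcc_of_le hab]) hφ,
    ← intervalIntegral.integral_sub hh hφ]
  exact intervalIntegral.norm_integral_le_integral_norm hab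

theorem oscillatory_polynomial_approx_general (a b : ℝ) (hab : a < b)
    (f : ℝ → ℂ) (hf : ContinuousOn f (Set.Icc a b))
    (g g' : ℝ → ℝ) (hg : ∀ x ∈ Set.Icc a b, HasDerivAt g (g' x) x)
    (hg' : ContinuousOn g' (Set.Icc a b))
    (p : Polynomial ℂ) :
    ‖(∫ x in a..b, Complex.exp (Complex.I * (g x : ℂ)) * f x) -
        Complex.exp (Complex.I * (g a : ℂ)) *
          (∑ k ∈ Finset.range (p.natDegree + 1),
            Complex.I ^ (k + 1) * ((Polynomial.derivative)^[k] p).eval ((g a : ℂ))) +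
        Complex.exp (Complex.I * (g b : ℂ)) *
          (∑ k ∈ Finset.range (p.natDegree + 1),
            Complex.I ^ (k + 1) * ((Polynomial.derivative)^[k] p).eval ((g b : ℂ)))‖ ≤
      ∫ x in a..b, ‖f x - (p.eval ((g x : ℂ))) * (g' x : ℂ)‖ := by
  have hprimitive : ∀ x ∈ Set.Icc a b,
      HasDerivAt (fun x => exp (I * g x) * (expIMulAntideriv p).eval (g x : ℂ))
        (exp (I * g x) * (p.eval (g x : ℂ) * g' x)) x := fun x hx => by
    have hcomp :=
      (expIMulAntideriv.hasDerivAt_exp_mul_eval p (g x)).comp x (hg x hx).ofReal_comp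
    rwa [mul_assoc] at hcomp
  have hgC : ContinuousOn (fun x => (g x : ℂ)) (Set.Icc a b) :=
    continuous_ofReal.comp_continuousOn fun x hx => (hg x hx).continuousAt.continuousWithinAt
  have hexp : ContinuousOn (fun x => exp (I * g x)) (Set.Icc a b) :=
    (continuousOn_const.mul hgC).cexp
  have hbound := norm_integral_sub_sub_le_integral_norm_sub hab.le hprimitive
    ((hexp.mul ((p.continuous.comp_continuousOn hgC).mul
      (continuous_ofReal.comp_continuousOn hg'))).intervalIntegrable_of_Icc hab.le)
    ((hexp.mul hf).intervalIntegrable_of_Icc hab.le)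
  simp only [Pi.mul_apply, expIMulAntideriv.eval_eq, ← mul_sub, norm_mul, norm_exp_I_mul_ofReal,
    one_mul] at hbound
  refine le_of_eq_of_le ?_ hbound
  congr 1
  ring

theorem oscillatory_polynomial_approx (a b : ℝ) (hab : a < b)
    (f : ℝ → ℂ) (hf : ContinuousOn f (Set.Icc a b))
    (g g' : ℝ → ℝ) (hg : ∀ x ∈ Set.Icc a b, HasDerivAt g (g' x) x)
    (hg' : ContinuousOn g' (Set.Icc a b))
    (hg'0 : ∀ x ∈ Set.Icc a b, g' x ≠ 0)
    (p : Polynomial ℂ) :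
    ‖(∫ x in a..b, Complex.exp (Complex.I * (g x : ℂ)) * f x) -
        Complex.exp (Complex.I * (g a : ℂ)) *
          (∑ k ∈ Finset.range (p.natDegree + 1),
            Complex.I ^ (k + 1) * ((Polynomial.derivative)^[k] p).eval ((g a : ℂ))) +
        Complex.exp (Complex.I * (g b : ℂ)) *
          (∑ k ∈ Finset.range (p.natDegree + 1),
            Complex.I ^ (k + 1) * ((Polynomial.derivative)^[k] p).eval ((g b : ℂ)))‖ ≤
      ∫ x in a..b, ‖f x - (p.eval ((g x : ℂ))) * (g' x : ℂ)‖ :=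
  oscillatory_polynomial_approx_general a b hab f hf g g' hg hg' p
end

section
/- Define the norms ‖f‖_X := sup_{y∈(-1,1)}(1-y^2)|f'(y)| + ‖f‖_{L^∞(-1,1)} and ‖g‖_Y := sup_{y∈(-1,1)}(1+y)(1-y)^2|g(y)|. Suppose f_1, f_{-1}: (-1,1) → ℂ are continuously differentiable with |f_{-1}(y)| ≤ C, |f_{-1}'(y)| ≤ C(1-y)^{-2}, |f_1(y)| ≤ C(1+y)^{-1}, |f_1'(y)| ≤ C(1+y)^{-2}, and W_*: (-1,1) → ℂ satisfies |W_*(y)| ≥ c(1-y^2)^{-2} with c > 0. Then the operator T(g)(y) := f_{-1}(y)∫_y^1 (f_1(x)/W_*(x)) g(x) dx + f_1(y)∫_{-1}^y (f_{-1}(x)/W_*(x)) g(x) dx satisfies ‖T(g)‖_X ≤ C' ‖g‖_Y for a constant C' depending only on C and c, for all g with ‖g‖_Y < ∞. -/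
open Set

noncomputable def Xnorm (f : ℝ → ℂ) : ℝ :=
  sSup ((fun y => (1 - y ^ 2) * ‖deriv f y‖) '' Set.Ioo (-1 : ℝ) 1) +
    sSup ((fun y => ‖f y‖) '' Set.Ioo (-1 : ℝ) 1)

noncomputable def Ynorm (g : ℝ → ℂ) : ℝ :=
  sSup ((fun y => (1 + y) * (1 - y) ^ 2 * ‖g y‖) '' Set.Ioo (-1 : ℝ) 1)

/-- The variation-of-constants operator `T`. -/
noncomputable def varConst (f₁ fm₁ W g : ℝ → ℂ) (y : ℝ) : ℂ :=
  fm₁ y * (∫ x in y..1, f₁ x / W x * g x) + f₁ y * ∫ x in (-1)..y, fm₁ x / W x * g x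

/-
Pointwise, the weights cancel: `‖u / W * g‖ ≤ ‖u‖ (1 + x) ‖g‖_Y / c`, so both integrands are
bounded by `K = 2 C ‖g‖_Y / c`. The two integrals are then `O(K (1 - y))` and `O(K (1 + y))`,
which gives the sup bound. For the derivative at `t`, each product `f(y) · ∫ …` is Lipschitz to
the right of `t` with constant `O(C K / (1 - t²))`: the mean value theorem handles `f`, the
integrand bound handles the integral.

Nothing makes `W` or `g` measurable, so an integral may take the junk value `0`. It is still
Lipschitz to the right of `t` towards some value, possibly different from its value at `t`.
Such a jump makes `T g` non-differentiable at `t`, and then `deriv` is `0`.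
-/

open MeasureTheory Filter Topology

section IntervalIntegral

variable {E : Type*} [NormedAddCommGroup E] {h : ℝ → E} {a b t K : ℝ}

theorem norm_intervalIntegral_le_of_norm_le_on_Ioo [NormedSpace ℝ E] (hab : a ≤ b)
    (hK : ∀ x ∈ Ioo a b, ‖h x‖ ≤ K) : ‖∫ x in a..b, h x‖ ≤ K * (b - a) := by
  rw [intervalIntegral.integral_of_le hab, integral_Ioc_eq_integral_Ioo,
    ← Real.volume_real_Ioo_of_le hab]
  exact norm_setIntegral_le_of_norm_le_const measure_Ioo_lt_top hK

theorem intervalIntegrable_of_forall_Ioo_of_norm_le (htb : t < b)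
    (hK : ∀ x ∈ Ioo t b, ‖h x‖ ≤ K) (hint : ∀ z ∈ Ioo t b, IntervalIntegrable h volume z b) :
    IntervalIntegrable h volume t b := by
  obtain ⟨u, -, hu, hlim⟩ := exists_seq_strictAnti_tendsto' htb
  rw [intervalIntegrable_iff_integrableOn_Ioc_of_le htb.le]
  refine integrableOn_Ioc_of_intervalIntegral_norm_bounded_left (I := K * (b - t))
    (fun n => (intervalIntegrable_iff_integrableOn_Ioc_of_le (hu n).2.le).1 (hint _ (hu n)))
    hlim (Eventually.of_forall fun n => ?_)
  have hK₀ : 0 ≤ K := (norm_nonneg _).trans (hK _ (hu n))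
  rw [← intervalIntegral.integral_of_le (hu n).2.le]
  calc ∫ x in u n..b, ‖h x‖ ≤ ‖∫ x in u n..b, ‖h x‖‖ := Real.le_norm_self _
    _ ≤ K * (b - u n) := norm_intervalIntegral_le_of_norm_le_on_Ioo (hu n).2.le
        fun x hx => by simpa using hK x ⟨(hu n).1.trans hx.1, hx.2⟩
    _ ≤ K * (b - t) := by gcongr; exact (hu n).1.le

theorem exists_eventually_norm_integral_left_sub_le [NormedSpace ℝ E]
    (hK : ∀ x ∈ Ioo a b, ‖h x‖ ≤ K) (ht : t ∈ Ioo a b) :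
    ∃ c, ∀ᶠ y in 𝓝[>] t, ‖(∫ x in y..b, h x) - c‖ ≤ K * (y - t) := by
  have hK₀ : 0 ≤ K := (norm_nonneg _).trans (hK t ht)
  by_cases hint : ∀ z ∈ Ioo t b, IntervalIntegrable h volume z b
  · have hit : IntervalIntegrable h volume t b :=
      intervalIntegrable_of_forall_Ioo_of_norm_le ht.2
        (fun x hx => hK x ⟨ht.1.trans hx.1, hx.2⟩) hint
    refine ⟨∫ x in t..b, h x, ?_⟩
    filter_upwards [Ioo_mem_nhdsGT ht.2] with y hy
    rw [← intervalIntegral.integral_add_adjacent_intervals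
      (hit.mono_set (uIcc_subset_uIcc_left (Icc_subset_uIcc ⟨hy.1.le, hy.2.le⟩))) (hint y hy),
      sub_add_cancel_right, norm_neg]
    exact norm_intervalIntegral_le_of_norm_le_on_Ioo hy.1.le
      fun x hx => hK x ⟨ht.1.trans hx.1, hx.2.trans hy.2⟩
  · push Not at hint
    obtain ⟨z, hz, hnz⟩ := hint
    refine ⟨0, ?_⟩
    filter_upwards [Ioo_mem_nhdsGT hz.1] with y hy
    have hny : ¬IntervalIntegrable h volume y b := fun hyb =>
      hnz (hyb.mono_set (uIcc_subset_uIcc_right (Icc_subset_uIcc ⟨hy.2.le, hz.2.le⟩)))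
    rw [intervalIntegral.integral_undef hny, sub_zero, norm_zero]
    exact mul_nonneg hK₀ (sub_nonneg.2 hy.1.le)

theorem exists_eventually_norm_integral_right_sub_le [NormedSpace ℝ E]
    (hK : ∀ x ∈ Ioo a b, ‖h x‖ ≤ K) (ht : t ∈ Ioo a b) :
    ∃ c, ∀ᶠ y in 𝓝[>] t, ‖(∫ x in a..y, h x) - c‖ ≤ K * (y - t) := by
  have hK₀ : 0 ≤ K := (norm_nonneg _).trans (hK t ht)
  by_cases hint : ∃ z ∈ Ioo t b, IntervalIntegrable h volume a z
  · obtain ⟨z, hz, hiz⟩ := hint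
    refine ⟨∫ x in a..t, h x, ?_⟩
    filter_upwards [Ioo_mem_nhdsGT hz.1] with y hy
    rw [intervalIntegral.integral_interval_sub_left
      (hiz.mono_set (uIcc_subset_uIcc_left (Icc_subset_uIcc ⟨(ht.1.trans hy.1).le, hy.2.le⟩)))
      (hiz.mono_set (uIcc_subset_uIcc_left (Icc_subset_uIcc ⟨ht.1.le, hz.1.le⟩)))]
    exact norm_intervalIntegral_le_of_norm_le_on_Ioo hy.1.le
      fun x hx => hK x ⟨ht.1.trans hx.1, hx.2.trans (hy.2.trans hz.2)⟩
  · push Not at hint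
    refine ⟨0, ?_⟩
    filter_upwards [Ioo_mem_nhdsGT ht.2] with y hy
    rw [intervalIntegral.integral_undef (hint y hy), sub_zero, norm_zero]
    exact mul_nonneg hK₀ (sub_nonneg.2 hy.1.le)

end IntervalIntegral

theorem norm_deriv_le_of_eventually_norm_sub_le {E : Type*} [NormedAddCommGroup E]
    [NormedSpace ℝ E] {φ : ℝ → E} {t L : ℝ} {c : E}
    (h : ∀ᶠ y in 𝓝[>] t, ‖φ y - c‖ ≤ L * (y - t)) : ‖deriv φ t‖ ≤ L := by
  by_cases hd : DifferentiableAt ℝ φ t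
  swap
  · obtain ⟨y, hy, hty⟩ := (h.and self_mem_nhdsWithin).exists
    rw [deriv_zero_of_not_differentiableAt hd, norm_zero]
    exact nonneg_of_mul_nonneg_left ((norm_nonneg _).trans hy) (sub_pos.2 hty)
  obtain rfl : c = φ t := by
    have hlin : Tendsto (fun y => L * (y - t)) (𝓝[>] t) (𝓝 0) := by
      simpa using (((continuous_sub_right t).const_mul L).tendsto t).mono_left nhdsWithin_le_nhds
    refine tendsto_nhds_unique (l := 𝓝[>] t) ?_
      (hd.continuousAt.tendsto.mono_left nhdsWithin_le_nhds)
    exact tendsto_iff_norm_sub_tendsto_zero.2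
      (squeeze_zero' (Eventually.of_forall fun _ => norm_nonneg _) h hlin)
  have hslope : Tendsto (slope φ t) (𝓝[>] t) (𝓝 (deriv φ t)) :=
    (hasDerivWithinAt_iff_tendsto_slope' (lt_irrefl t)).1 hd.hasDerivAt.hasDerivWithinAt
  refine le_of_tendsto hslope.norm ?_
  filter_upwards [h, self_mem_nhdsWithin] with y hy hty
  have hpos : 0 < y - t := sub_pos.2 hty
  rw [slope_def_module, norm_smul, norm_inv, Real.norm_of_nonneg hpos.le, inv_mul_le_iff₀ hpos,
    mul_comm]
  exact hy

theorem norm_mul_sub_mul_le {R : Type*} [SeminormedRing R] (a b c d : R) :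
    ‖a * b - c * d‖ ≤ ‖a - c‖ * ‖b‖ + ‖c‖ * ‖b - d‖ := by
  calc ‖a * b - c * d‖ = ‖(a - c) * b + c * (b - d)‖ := by noncomm_ring
    _ ≤ ‖a - c‖ * ‖b‖ + ‖c‖ * ‖b - d‖ :=
      (norm_add_le _ _).trans (add_le_add (norm_mul_le _ _) (norm_mul_le _ _))

theorem eventually_norm_mul_sub_mul_le {R : Type*} [SeminormedRing R] {u v : ℝ → R} {t A B P Q : ℝ}
    {c : R} (hu : ∀ᶠ y in 𝓝[>] t, ‖u y - u t‖ ≤ A * (y - t))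
    (hv : ∀ᶠ y in 𝓝[>] t, ‖v y - c‖ ≤ B * (y - t)) (hvP : ∀ᶠ y in 𝓝[>] t, ‖v y‖ ≤ P)
    (hut : ‖u t‖ ≤ Q) :
    ∀ᶠ y in 𝓝[>] t, ‖u y * v y - u t * c‖ ≤ (A * P + Q * B) * (y - t) := by
  filter_upwards [hu, hv, hvP] with y huy hvy hvPy
  calc ‖u y * v y - u t * c‖ ≤ ‖u y - u t‖ * ‖v y‖ + ‖u t‖ * ‖v y - c‖ :=
        norm_mul_sub_mul_le _ _ _ _
    _ ≤ A * (y - t) * P + Q * (B * (y - t)) :=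
        add_le_add (mul_le_mul huy hvPy (norm_nonneg _) ((norm_nonneg _).trans huy))
          (mul_le_mul hut hvy (norm_nonneg _) ((norm_nonneg _).trans hut))
    _ = (A * P + Q * B) * (y - t) := by ring

theorem eventually_norm_sub_le_of_norm_deriv_le {E : Type*} [NormedAddCommGroup E]
    [NormedSpace ℝ E] {u : ℝ → E} {t b A : ℝ} (htb : t < b)
    (hd : ∀ x ∈ Ico t b, DifferentiableAt ℝ u x) (hA : ∀ x ∈ Ico t b, ‖deriv u x‖ ≤ A) :
    ∀ᶠ y in 𝓝[>] t, ‖u y - u t‖ ≤ A * (y - t) := by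
  filter_upwards [Ioo_mem_nhdsGT htb] with y hy
  have hsub : Icc t y ⊆ Ico t b := Icc_subset_Ico_right hy.2
  exact norm_image_sub_le_of_norm_deriv_le_segment'
    (fun x hx => (hd x (hsub hx)).hasDerivAt.hasDerivWithinAt)
    (fun x hx => hA x (hsub (Ico_subset_Icc_self hx))) y (right_mem_Icc.2 hy.1.le)

section VariationOfConstants

variable {f₁ fm₁ W g : ℝ → ℂ} {C K : ℝ}

theorem norm_div_mul_le_of_weighted_bounds {u : ℝ → ℂ} {c M A x : ℝ} (hx : x ∈ Ioo (-1 : ℝ) 1)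
    (hc : 0 < c) (hu : ‖u x‖ * (1 + x) ≤ A) (hW : c * ((1 - x ^ 2) ^ 2)⁻¹ ≤ ‖W x‖)
    (hg : (1 + x) * (1 - x) ^ 2 * ‖g x‖ ≤ M) : ‖u x / W x * g x‖ ≤ A * M / c := by
  obtain ⟨hx₁, hx₂⟩ := hx
  have hw : 0 < 1 - x ^ 2 := by nlinarith
  have hWinv : ‖W x‖⁻¹ ≤ (1 - x ^ 2) ^ 2 / c := by
    have hpos : 0 < c * ((1 - x ^ 2) ^ 2)⁻¹ := by positivity
    rwa [inv_le_comm₀ (hpos.trans_le hW) (by positivity), inv_div, div_eq_mul_inv]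
  calc ‖u x / W x * g x‖ = ‖u x‖ * ‖W x‖⁻¹ * ‖g x‖ := by rw [norm_mul, norm_div, div_eq_mul_inv]
    _ ≤ ‖u x‖ * ((1 - x ^ 2) ^ 2 / c) * ‖g x‖ := by gcongr
    _ = ‖u x‖ * (1 + x) * ((1 + x) * (1 - x) ^ 2 * ‖g x‖) / c := by ring
    _ ≤ A * M / c := by
      have hp : 0 ≤ 1 + x := by linarith
      gcongr
      exact (mul_nonneg (norm_nonneg _) hp).trans hu


theorem norm_varConst_le (hK₁ : ∀ x ∈ Ioo (-1 : ℝ) 1, ‖f₁ x / W x * g x‖ ≤ K)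
    (hK₂ : ∀ x ∈ Ioo (-1 : ℝ) 1, ‖fm₁ x / W x * g x‖ ≤ K) {t : ℝ} (ht : t ∈ Ioo (-1 : ℝ) 1)
    (hfm : ‖fm₁ t‖ ≤ C) (hf : ‖f₁ t‖ ≤ C * (1 + t)⁻¹) : ‖varConst f₁ fm₁ W g t‖ ≤ 3 * C * K := by
  obtain ⟨ht₁, ht₂⟩ := ht
  have hp : 0 < 1 + t := by linarith
  have hC : 0 ≤ C := (norm_nonneg _).trans hfm
  have hK : 0 ≤ K := (norm_nonneg _).trans (hK₁ t ⟨ht₁, ht₂⟩)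
  have hF : ‖∫ x in t..1, f₁ x / W x * g x‖ ≤ K * (1 - t) :=
    norm_intervalIntegral_le_of_norm_le_on_Ioo ht₂.le fun x hx => hK₁ x ⟨ht₁.trans hx.1, hx.2⟩
  have hG : ‖∫ x in (-1)..t, fm₁ x / W x * g x‖ ≤ K * (t - -1) :=
    norm_intervalIntegral_le_of_norm_le_on_Ioo ht₁.le fun x hx => hK₂ x ⟨hx.1, hx.2.trans ht₂⟩
  calc ‖varConst f₁ fm₁ W g t‖
      ≤ ‖fm₁ t‖ * ‖∫ x in t..1, f₁ x / W x * g x‖ + ‖f₁ t‖ * ‖∫ x in (-1)..t, fm₁ x / W x * g x‖ :=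
        (norm_add_le _ _).trans_eq (by rw [norm_mul, norm_mul])
    _ ≤ C * (K * (1 - t)) + C * (1 + t)⁻¹ * (K * (t - -1)) := by gcongr
    _ = C * K * (2 - t) := by field_simp; ring
    _ ≤ 3 * C * K := by nlinarith [mul_nonneg hC hK]

theorem norm_deriv_varConst_le (hdf : ∀ y ∈ Ioo (-1 : ℝ) 1, DifferentiableAt ℝ f₁ y)
    (hdm : ∀ y ∈ Ioo (-1 : ℝ) 1, DifferentiableAt ℝ fm₁ y)
    (hbnd : ∀ y ∈ Ioo (-1 : ℝ) 1,
      ‖fm₁ y‖ ≤ C ∧ ‖deriv fm₁ y‖ ≤ C * ((1 - y) ^ 2)⁻¹ ∧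
        ‖f₁ y‖ ≤ C * (1 + y)⁻¹ ∧ ‖deriv f₁ y‖ ≤ C * ((1 + y) ^ 2)⁻¹)
    (hK₁ : ∀ x ∈ Ioo (-1 : ℝ) 1, ‖f₁ x / W x * g x‖ ≤ K)
    (hK₂ : ∀ x ∈ Ioo (-1 : ℝ) 1, ‖fm₁ x / W x * g x‖ ≤ K) {t : ℝ} (ht : t ∈ Ioo (-1 : ℝ) 1) :
    (1 - t ^ 2) * ‖deriv (varConst f₁ fm₁ W g) t‖ ≤ 15 * C * K := by
  obtain ⟨ht₁, ht₂⟩ := ht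
  have hp : 0 < 1 + t := by linarith
  have hq : 0 < 1 - t := by linarith
  have hC : 0 ≤ C := (norm_nonneg _).trans (hbnd t ⟨ht₁, ht₂⟩).1
  have hK : 0 ≤ K := (norm_nonneg _).trans (hK₁ t ⟨ht₁, ht₂⟩)
  obtain ⟨cF, hF⟩ := exists_eventually_norm_integral_left_sub_le hK₁ ⟨ht₁, ht₂⟩
  obtain ⟨cG, hG⟩ := exists_eventually_norm_integral_right_sub_le hK₂ ⟨ht₁, ht₂⟩
  have hfmLip : ∀ᶠ y in 𝓝[>] t, ‖fm₁ y - fm₁ t‖ ≤ 4 * C / (1 - t) ^ 2 * (y - t) := by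
    refine eventually_norm_sub_le_of_norm_deriv_le (b := (1 + t) / 2) (by linarith)
      (fun x hx => hdm x ⟨by linarith [hx.1], by linarith [hx.2]⟩) fun x hx => ?_
    have hx' : (1 - t) / 2 ≤ 1 - x := by linarith [hx.2]
    calc ‖deriv fm₁ x‖ ≤ C * ((1 - x) ^ 2)⁻¹ :=
          (hbnd x ⟨by linarith [hx.1], by linarith [hx.2]⟩).2.1
      _ ≤ C * (((1 - t) / 2) ^ 2)⁻¹ := by gcongr
      _ = 4 * C / (1 - t) ^ 2 := by field_simp; ring
  have hfLip : ∀ᶠ y in 𝓝[>] t, ‖f₁ y - f₁ t‖ ≤ C / (1 + t) ^ 2 * (y - t) := by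
    refine eventually_norm_sub_le_of_norm_deriv_le ht₂
      (fun x hx => hdf x ⟨by linarith [hx.1], hx.2⟩) fun x hx => ?_
    calc ‖deriv f₁ x‖ ≤ C * ((1 + x) ^ 2)⁻¹ := (hbnd x ⟨by linarith [hx.1], hx.2⟩).2.2.2
      _ ≤ C * ((1 + t) ^ 2)⁻¹ := by gcongr; exact hx.1
      _ = C / (1 + t) ^ 2 := (div_eq_mul_inv _ _).symm
  have hFbd : ∀ᶠ y in 𝓝[>] t, ‖∫ x in y..1, f₁ x / W x * g x‖ ≤ K * (1 - t) := by
    filter_upwards [Ioo_mem_nhdsGT ht₂] with y hy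
    calc _ ≤ K * (1 - y) := norm_intervalIntegral_le_of_norm_le_on_Ioo hy.2.le
          fun x hx => hK₁ x ⟨by linarith [hx.1, hy.1], hx.2⟩
      _ ≤ K * (1 - t) := by gcongr; exact hy.1.le
  have hGbd : ∀ᶠ y in 𝓝[>] t, ‖∫ x in (-1)..y, fm₁ x / W x * g x‖ ≤ K * (2 * (1 + t)) := by
    filter_upwards [Ioo_mem_nhdsGT (show t < min 1 (1 + 2 * t) from lt_min ht₂ (by linarith))]
      with y hy
    have hy₁ : y < 1 := hy.2.trans_le (min_le_left _ _)
    have hy₂ : y < 1 + 2 * t := hy.2.trans_le (min_le_right _ _)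
    calc _ ≤ K * (y - -1) := norm_intervalIntegral_le_of_norm_le_on_Ioo (by linarith [hy.1])
          fun x hx => hK₂ x ⟨hx.1, hx.2.trans hy₁⟩
      _ ≤ K * (2 * (1 + t)) := by gcongr; linarith
  have hderiv : ‖deriv (varConst f₁ fm₁ W g) t‖ ≤
      (4 * C / (1 - t) ^ 2 * (K * (1 - t)) + C * K) +
        (C / (1 + t) ^ 2 * (K * (2 * (1 + t))) + C * (1 + t)⁻¹ * K) := by
    refine norm_deriv_le_of_eventually_norm_sub_le (c := fm₁ t * cF + f₁ t * cG) ?_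
    filter_upwards [eventually_norm_mul_sub_mul_le hfmLip hF hFbd (hbnd t ⟨ht₁, ht₂⟩).1,
      eventually_norm_mul_sub_mul_le hfLip hG hGbd (hbnd t ⟨ht₁, ht₂⟩).2.2.1] with y hF' hG'
    rw [varConst, add_sub_add_comm, add_mul]
    exact (norm_add_le _ _).trans (add_le_add hF' hG')
  calc (1 - t ^ 2) * ‖deriv (varConst f₁ fm₁ W g) t‖
      ≤ (1 - t ^ 2) * ((4 * C / (1 - t) ^ 2 * (K * (1 - t)) + C * K) +
        (C / (1 + t) ^ 2 * (K * (2 * (1 + t))) + C * (1 + t)⁻¹ * K)) := by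
        gcongr
        nlinarith
    _ = C * K * (4 * (1 + t) + (1 - t ^ 2) + 3 * (1 - t)) := by field_simp; ring
    _ ≤ 15 * C * K := by nlinarith [mul_nonneg hC hK]

end VariationOfConstants

theorem variation_of_constants_bound (C c : ℝ) (hC : 0 < C) (hc : 0 < c) :
    ∃ C' : ℝ, 0 < C' ∧ ∀ f₁ fm₁ W g : ℝ → ℂ,
      (∀ y ∈ Set.Ioo (-1 : ℝ) 1, DifferentiableAt ℝ f₁ y) →
      (∀ y ∈ Set.Ioo (-1 : ℝ) 1, DifferentiableAt ℝ fm₁ y) →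
      ContinuousOn (deriv f₁) (Set.Ioo (-1 : ℝ) 1) →
      ContinuousOn (deriv fm₁) (Set.Ioo (-1 : ℝ) 1) →
      (∀ y ∈ Set.Ioo (-1 : ℝ) 1,
        ‖fm₁ y‖ ≤ C ∧ ‖deriv fm₁ y‖ ≤ C * ((1 - y) ^ 2)⁻¹ ∧
        ‖f₁ y‖ ≤ C * (1 + y)⁻¹ ∧ ‖deriv f₁ y‖ ≤ C * ((1 + y) ^ 2)⁻¹) →
      (∀ y ∈ Set.Ioo (-1 : ℝ) 1, c * (((1 - y ^ 2) ^ 2)⁻¹) ≤ ‖W y‖) →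
      ContinuousOn g (Set.Ioo (-1 : ℝ) 1) →
      BddAbove ((fun y => (1 + y) * (1 - y) ^ 2 * ‖g y‖) '' Set.Ioo (-1 : ℝ) 1) →
      Xnorm (varConst f₁ fm₁ W g) ≤ C' * Ynorm g := by
  refine ⟨36 * C ^ 2 / c, by positivity, fun f₁ fm₁ W g hdf hdm _ _ hbnd hW _ hbdd => ?_⟩
  have hg : ∀ x ∈ Ioo (-1 : ℝ) 1, (1 + x) * (1 - x) ^ 2 * ‖g x‖ ≤ Ynorm g :=
    fun x hx => le_csSup hbdd (mem_image_of_mem _ hx)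
  have hM : 0 ≤ Ynorm g := le_trans (by positivity) (hg 0 (by norm_num))
  have hK₁ : ∀ x ∈ Ioo (-1 : ℝ) 1, ‖f₁ x / W x * g x‖ ≤ 2 * C * Ynorm g / c := fun x hx =>
    norm_div_mul_le_of_weighted_bounds hx hc
      (((le_mul_inv_iff₀ (by linarith [hx.1])).1 (hbnd x hx).2.2.1).trans (by linarith))
      (hW x hx) (hg x hx)
  have hK₂ : ∀ x ∈ Ioo (-1 : ℝ) 1, ‖fm₁ x / W x * g x‖ ≤ 2 * C * Ynorm g / c := fun x hx =>
    norm_div_mul_le_of_weighted_bounds hx hc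
      (by nlinarith [(hbnd x hx).1, norm_nonneg (fm₁ x), hx.2]) (hW x hx) (hg x hx)
  calc Xnorm (varConst f₁ fm₁ W g)
      ≤ 15 * C * (2 * C * Ynorm g / c) + 3 * C * (2 * C * Ynorm g / c) :=
        add_le_add
          (Real.sSup_le (fun _ ⟨t, ht, hv⟩ => hv ▸ norm_deriv_varConst_le hdf hdm hbnd hK₁ hK₂ ht)
            (by positivity))
          (Real.sSup_le
            (fun _ ⟨t, ht, hv⟩ => hv ▸ norm_varConst_le hK₁ hK₂ ht (hbnd t ht).1 (hbnd t ht).2.2.1)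
            (by positivity))
    _ = 36 * C ^ 2 / c * Ynorm g := by ring
end
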